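/- arXiv:math/0607692 — 3 statements merged into one kernel-verified Lean document; each statement's English description precedes it below -/
import Mathlib

section
/- Let α > 1 be a real number and β a real number. A positive integer m > β belongs to the Beatty sequence B_{α,β} (i.e., m = ⌊αn + β⌋ for some positive integer n) if and only if 0 < {α^{−1}(m − β + 1)} ≤ α^{−1}, where {t} denotes the fractional part of t; and in this case m = ⌊αn + β⌋ holds if and only if n = ⌈α^{−1}(m − β)⌉. -/
/-!
Since `α > 0`, the condition `m = ⌊α t + β⌋` says exactly that `t` lies in the half-open interval
`[x, y)` with `x = α⁻¹ (m - β)` and `y = α⁻¹ (m - β + 1)`, whose length `α⁻¹` is less than `1`.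
Such an interval contains at most one integer, namely `⌈x⌉`, and it contains one precisely when
`⌊y⌋` lies in it and `y` is not an integer, i.e. when `0 < {y} ≤ y - x = α⁻¹`. That integer is
positive because `x > 0` when `m > β`.
-/

open Set

lemma floor_mul_add_eq_iff_mem_Ico {α : ℝ} (hα : 0 < α) (β t : ℝ) (m : ℤ) :
    ⌊α * t + β⌋ = m ↔ t ∈ Ico (α⁻¹ * (m - β)) (α⁻¹ * (m - β + 1)) := by
  rw [Int.floor_eq_iff, mem_Ico, ← div_eq_inv_mul, ← div_eq_inv_mul, div_le_iff₀ hα,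
    lt_div_iff₀ hα]
  constructor <;> rintro ⟨h₁, h₂⟩ <;> constructor <;> linarith

lemma exists_int_mem_Ico_iff_fract {x y : ℝ} (hxy : y - x < 1) :
    (∃ n : ℤ, (n : ℝ) ∈ Ico x y) ↔ 0 < Int.fract y ∧ Int.fract y ≤ y - x := by
  rw [Int.fract]
  constructor
  · rintro ⟨n, hxn, hny⟩
    have hn_le : (n : ℝ) ≤ ⌊y⌋ := by exact_mod_cast Int.le_floor.2 hny.le
    refine ⟨?_, by linarith⟩
    by_contra! hy
    have hy_int : y = ⌊y⌋ := by linarith [Int.floor_le y]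
    -- `y` is an integer, so the integer `n < y` is at most `y - 1 < x`.
    have : n < ⌊y⌋ := by exact_mod_cast hy_int ▸ hny
    have : (n : ℝ) + 1 ≤ ⌊y⌋ := by exact_mod_cast this
    linarith
  · rintro ⟨hpos, hle⟩
    exact ⟨⌊y⌋, by linarith, by linarith⟩

lemma eq_ceil_of_mem_Ico {x y : ℝ} (hxy : y - x ≤ 1) {n : ℤ} (hn : (n : ℝ) ∈ Ico x y) :
    n = ⌈x⌉ := by
  have hceil_le : ⌈x⌉ ≤ n := Int.ceil_le.2 hn.1
  have : (n : ℝ) < ⌈x⌉ + 1 := by linarith [hn.2, Int.le_ceil x]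
  have : n < ⌈x⌉ + 1 := by exact_mod_cast this
  omega

lemma int_mem_Ico_iff_eq_ceil {x y : ℝ} (hxy : y - x ≤ 1) (hex : ∃ k : ℤ, (k : ℝ) ∈ Ico x y)
    (n : ℤ) : (n : ℝ) ∈ Ico x y ↔ n = ⌈x⌉ := by
  obtain ⟨k, hk⟩ := hex
  refine ⟨eq_ceil_of_mem_Ico hxy, fun hn => ?_⟩
  rwa [hn, ← eq_ceil_of_mem_Ico hxy hk]

lemma exists_pos_nat_mem_iff_exists_int_mem {s : Set ℝ} (hs : ∀ t ∈ s, 0 < t) :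
    (∃ n : ℕ, 0 < n ∧ (n : ℝ) ∈ s) ↔ ∃ k : ℤ, (k : ℝ) ∈ s := by
  constructor
  · rintro ⟨n, -, hn⟩
    exact ⟨n, by exact_mod_cast hn⟩
  · rintro ⟨k, hk⟩
    have hk_pos : 0 < k := by exact_mod_cast hs _ hk
    lift k to ℕ using hk_pos.le
    exact ⟨k, by exact_mod_cast hk_pos, by exact_mod_cast hk⟩

theorem beatty_membership_characterization_general
    (α β : ℝ) (hα : 1 < α) (m : ℤ) (hmβ : β < (m : ℝ)) :
    ((∃ n : ℕ, 0 < n ∧ m = ⌊α * n + β⌋) ↔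
      (0 < Int.fract (α⁻¹ * ((m : ℝ) - β + 1)) ∧
        Int.fract (α⁻¹ * ((m : ℝ) - β + 1)) ≤ α⁻¹)) ∧
    ((0 < Int.fract (α⁻¹ * ((m : ℝ) - β + 1)) ∧
        Int.fract (α⁻¹ * ((m : ℝ) - β + 1)) ≤ α⁻¹) →
      ∀ n : ℕ, 0 < n → (m = ⌊α * n + β⌋ ↔ (n : ℤ) = ⌈α⁻¹ * ((m : ℝ) - β)⌉)) := by
  have hα₀ : 0 < α := by linarith
  set I := Ico (α⁻¹ * ((m : ℝ) - β)) (α⁻¹ * ((m : ℝ) - β + 1))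
  have hwidth : α⁻¹ * ((m : ℝ) - β + 1) - α⁻¹ * ((m : ℝ) - β) = α⁻¹ := by ring
  have hwidth_lt : α⁻¹ < 1 := inv_lt_one_of_one_lt₀ hα
  have hmem : ∀ t : ℝ, m = ⌊α * t + β⌋ ↔ t ∈ I := fun t =>
    eq_comm.trans (floor_mul_add_eq_iff_mem_Ico hα₀ β t m)
  have hI_pos : ∀ t ∈ I, 0 < t := fun t ht =>
    (mul_pos (inv_pos.2 hα₀) (sub_pos.2 hmβ)).trans_le ht.1
  simp only [hmem]
  rw [exists_pos_nat_mem_iff_exists_int_mem hI_pos, exists_int_mem_Ico_iff_fract (by linarith),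
    hwidth]
  refine ⟨Iff.rfl, fun hfract n _ => ?_⟩
  have hex : ∃ k : ℤ, (k : ℝ) ∈ I :=
    (exists_int_mem_Ico_iff_fract (by linarith)).2 (by rwa [hwidth])
  exact_mod_cast int_mem_Ico_iff_eq_ceil (by linarith) hex n

/-- Characterization of members of the Beatty sequence B_{α,β} for α > 1:
a positive integer m > β belongs to the sequence iff
0 < {α⁻¹(m − β + 1)} ≤ α⁻¹, and in that case m = ⌊αn + β⌋ iff n = ⌈α⁻¹(m − β)⌉. -/
theorem beatty_membership_characterization
    (α β : ℝ) (hα : 1 < α) (m : ℤ) (hm : 0 < m) (hmβ : β < (m : ℝ)) :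
    ((∃ n : ℕ, 0 < n ∧ m = ⌊α * n + β⌋) ↔
      (0 < Int.fract (α⁻¹ * ((m : ℝ) - β + 1)) ∧
        Int.fract (α⁻¹ * ((m : ℝ) - β + 1)) ≤ α⁻¹)) ∧
    ((0 < Int.fract (α⁻¹ * ((m : ℝ) - β + 1)) ∧
        Int.fract (α⁻¹ * ((m : ℝ) - β + 1)) ≤ α⁻¹) →
      ∀ n : ℕ, 0 < n → (m = ⌊α * n + β⌋ ↔ (n : ℤ) = ⌈α⁻¹ * ((m : ℝ) - β)⌉)) :=
  beatty_membership_characterization_general α β hα m hmβ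
end

section
/- Let c be fixed with 1 < c < 2. For all sufficiently large real L and M, if ℓ and m are integers with L/2 < ℓ ≤ L, M/2 < m ≤ M, and 1 − 1/(2(LM)^{1 − 1/c}) ≤ {ℓ^{1/c} m^{1/c}}, then the integer n = ⌊ℓ^{1/c} m^{1/c}⌋ + 1 satisfies ⌊n^c⌋ = ℓm. -/
/-!
Put `x = (ℓm)^{1/c}`, so that `x^c = ℓm`, and `n = ⌊x⌋ + 1`. With `A = (LM)^{1/c} ≥ x`, the
hypothesis on the fractional part says `n - x ≤ 1 / (2 A^{c-1})`, so by convexity of `t ↦ t^c`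
`n^c - x^c ≤ c (n - x) n^{c-1} ≤ c (A + 1) / (2A)`, which is `< 1` once `A > c / (2 - c)`.
Hence `ℓm ≤ n^c < ℓm + 1`.
-/

open Real

lemma rpow_sub_rpow_le_mul_rpow_sub_one {c x y : ℝ} (hc : 1 ≤ c) (hx : 0 ≤ x) (hxy : x ≤ y) :
    y ^ c - x ^ c ≤ c * (y - x) * y ^ (c - 1) := by
  rcases hxy.eq_or_lt with rfl | hlt
  · simp
  have hy : 0 < y := hx.trans_lt hlt
  have hs : -1 ≤ -((y - x) / y) := by
    rw [neg_le_neg_iff, div_le_one hy]; linarith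
  have hbernoulli := one_add_mul_self_le_rpow_one_add hs hc
  have hxy' : 1 + -((y - x) / y) = x / y := by field_simp; ring
  rw [hxy', div_rpow hx hy.le, le_div_iff₀ (rpow_pos_of_pos hy c)] at hbernoulli
  rw [rpow_sub_one hy.ne']
  have : c * (y - x) * (y ^ c / y) = c * ((y - x) / y) * y ^ c := by ring
  linarith

lemma rpow_le_rpow_mul_div_of_le_one {a b p : ℝ} (ha : 0 < a) (hab : a ≤ b) (hp1 : p ≤ 1) :
    b ^ p ≤ a ^ p * (b / a) := by
  have hba : 1 ≤ b / a := (one_le_div ha).2 hab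
  calc b ^ p = a ^ p * (b / a) ^ p := by
        rw [div_rpow (ha.le.trans hab) ha.le, mul_div_cancel₀ _ (rpow_pos_of_pos ha p).ne']
    _ ≤ a ^ p * (b / a) := by
        gcongr
        simpa using rpow_le_rpow_of_exponent_le hba hp1

lemma natCast_floor_add_one_sub_self {x : ℝ} (hx : 0 ≤ x) :
    ((⌊x⌋₊ + 1 : ℕ) : ℝ) - x = 1 - Int.fract x := by
  rw [Int.fract, Nat.cast_add, natCast_floor_eq_intCast_floor hx, Nat.cast_one]
  ring

lemma rpow_natFloor_add_one_lt {c x A : ℝ} (hc1 : 1 ≤ c) (hc2 : c ≤ 2) (hx : 0 ≤ x) (hxA : x ≤ A)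
    (hA : c * (A + 1) < 2 * A) (hfract : 1 - 1 / (2 * A ^ (c - 1)) ≤ Int.fract x) :
    ((⌊x⌋₊ + 1 : ℕ) : ℝ) ^ c < x ^ c + 1 := by
  set n : ℝ := ((⌊x⌋₊ + 1 : ℕ) : ℝ)
  have hA0 : 0 < A := by nlinarith
  have hApow : 0 < A ^ (c - 1) := rpow_pos_of_pos hA0 _
  have hxn : x ≤ n := (Nat.lt_floor_add_one x).le.trans_eq (by simp [n])
  have hnx : n - x ≤ 1 / (2 * A ^ (c - 1)) := by
    rw [natCast_floor_add_one_sub_self hx]; linarith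
  have hnA : n ≤ A + 1 := by
    have := natCast_floor_add_one_sub_self hx
    linarith [Int.fract_nonneg x]
  have hgap := rpow_sub_rpow_le_mul_rpow_sub_one hc1 hx hxn
  have hn0 : 0 ≤ n := hx.trans hxn
  calc n ^ c ≤ x ^ c + c * (n - x) * n ^ (c - 1) := by linarith
    _ ≤ x ^ c + c * (1 / (2 * A ^ (c - 1))) * (A ^ (c - 1) * ((A + 1) / A)) := by
        gcongr
        exact (rpow_le_rpow hn0 hnA (by linarith)).trans
            (rpow_le_rpow_mul_div_of_le_one hA0 (by linarith) (by linarith))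
    _ = x ^ c + c * (A + 1) / (2 * A) := by field_simp
    _ < x ^ c + 1 := by rw [add_lt_add_iff_left, div_lt_one (by positivity)]; exact hA

lemma le_mul_rpow_one_div {c t L M : ℝ} (hc0 : 0 < c) (hc2 : c ≤ 2) (ht : 1 ≤ t) (hL : t ≤ L)
    (hM : t ≤ M) : t ≤ (L * M) ^ (1 / c) := by
  rw [one_div, le_rpow_inv_iff_of_pos (by linarith) (by nlinarith) hc0]
  calc t ^ c ≤ t ^ (2 : ℝ) := rpow_le_rpow_of_exponent_le ht hc2
    _ = t * t := by rw [rpow_two, sq]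
    _ ≤ L * M := by gcongr; linarith

/-- Let 1 < c < 2. For all sufficiently large L and M, if ℓ, m are integers with
L/2 < ℓ ≤ L, M/2 < m ≤ M and 1 − 1/(2(LM)^{1−1/c}) ≤ {ℓ^{1/c} m^{1/c}}, then
n = ⌊ℓ^{1/c} m^{1/c}⌋ + 1 satisfies ⌊n^c⌋ = ℓm. -/
theorem floor_power_hits_product
    (c : ℝ) (hc1 : 1 < c) (hc2 : c < 2) :
    ∃ L₀ : ℝ, ∀ L M : ℝ, L₀ ≤ L → L₀ ≤ M →
      ∀ ℓ m : ℕ, L / 2 < (ℓ : ℝ) → (ℓ : ℝ) ≤ L → M / 2 < (m : ℝ) → (m : ℝ) ≤ M →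
        1 - 1 / (2 * (L * M) ^ (1 - 1 / c)) ≤
          Int.fract ((ℓ : ℝ) ^ (1 / c) * (m : ℝ) ^ (1 / c)) →
        ⌊((⌊(ℓ : ℝ) ^ (1 / c) * (m : ℝ) ^ (1 / c)⌋₊ + 1 : ℕ) : ℝ) ^ c⌋₊ = ℓ * m := by
  have hc0 : 0 < c := by linarith
  have h2c : 0 < 2 - c := by linarith
  refine ⟨c / (2 - c) + 1, fun L M hL hM ℓ m _ hℓ _ hm hfract => ?_⟩
  have hL₀ : 1 ≤ c / (2 - c) + 1 := le_add_of_nonneg_left (by positivity)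
  set x := (ℓ : ℝ) ^ (1 / c) * (m : ℝ) ^ (1 / c) with hxdef
  set A := (L * M) ^ (1 / c)
  have hx : x = ((ℓ * m : ℕ) : ℝ) ^ (1 / c) := by rw [hxdef, Nat.cast_mul, mul_rpow] <;> positivity
  have hxc : x ^ c = ((ℓ * m : ℕ) : ℝ) := by rw [hx, one_div, rpow_inv_rpow (by positivity) hc0.ne']
  have hxA : x ≤ A := by
    rw [hx, Nat.cast_mul]
    exact rpow_le_rpow (by positivity)
      (mul_le_mul hℓ hm (by positivity) ((Nat.cast_nonneg _).trans hℓ)) (by positivity)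
  have hA : c * (A + 1) < 2 * A := by
    have := le_mul_rpow_one_div hc0 hc2.le hL₀ hL hM
    rw [div_add_one h2c.ne', div_le_iff₀ h2c] at this
    linarith
  have hApow : A ^ (c - 1) = (L * M) ^ (1 - 1 / c) := by
    rw [← rpow_mul (by nlinarith)]; congr 1; field_simp
  rw [← hApow] at hfract
  have hlt := rpow_natFloor_add_one_lt hc1.le hc2.le (by positivity) hxA hA hfract
  rw [Nat.floor_eq_iff (by positivity), ← hxc]
  have hxn : x ≤ ((⌊x⌋₊ + 1 : ℕ) : ℝ) := (Nat.lt_floor_add_one x).le.trans_eq (by simp)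
  exact ⟨rpow_le_rpow (by positivity) hxn hc0.le, hlt⟩
end

section
/- For every non-integer real number c > 1 and every odd prime p, there exists a positive integer n such that ⌊n^c⌋ is a quadratic non-residue modulo p; that is, N_c(p) exists (is finite). -/
open Filter Finset Function fwdDiff

/-!
Fix a non-residue `b`; it suffices that `⌊n ^ c⌋ ≡ b (mod p)`, i.e. that `n ^ c / p` lies within
`1 / (2p)` of `(b + 1/2) / p` modulo 1. With `k = ⌊c⌋`, the mean value theorem gives
`Δᵏ (n ^ c / p) → ∞` and `Δᵏ⁺¹ (n ^ c / p) → 0`. Such a sequence comes arbitrarily close to every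
point modulo 1, even along arbitrarily long runs of consecutive `n`: for `k = 0` because it
crosses every level with tiny steps, and inductively because on a long run where `Δs ≡ y (mod 1)`
for a small `y > 0`, `s` advances by about `y` per step modulo 1, so it walks into any target
window and stays there for a while.
-/

theorem fwdDiff_iter_comp_addMonoidHom {M N G : Type*} [AddCommMonoid M] [AddCommMonoid N]
    [AddCommGroup G] (φ : M →+ N) (f : N → G) (h : M) (k : ℕ) (y : M) :
    Δ_[h] ^[k] (f ∘ φ) y = Δ_[φ h] ^[k] f (φ y) := by
  simp [fwdDiff_iter_eq_sum_shift]

theorem hasDerivAt_iterate_fwdDiff {f f' : ℝ → ℝ} (hf : ∀ t > 0, HasDerivAt f (f' t) t)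
    (k : ℕ) {x : ℝ} (hx : 0 < x) : HasDerivAt (Δ_[1] ^[k] f) (Δ_[1] ^[k] f' x) x := by
  induction k generalizing x with
  | zero => exact hf x hx
  | succ k ih =>
    simp only [iterate_succ_apply']
    exact ((ih (by linarith)).comp_add_const x 1).sub (ih hx)

theorem exists_iterate_fwdDiff_rpow_eq (k : ℕ) (γ : ℝ) {x : ℝ} (hx : 0 < x) :
    ∃ ξ ∈ Set.Icc x (x + k),
      Δ_[1] ^[k] (fun t => t ^ γ) x = (∏ i ∈ range k, (γ - i)) * ξ ^ (γ - k) := by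
  induction k generalizing γ x with
  | zero => exact ⟨x, by simp, by simp⟩
  | succ k ih =>
    have hderiv : ∀ t > 0,
        HasDerivAt (fun t : ℝ => t ^ γ) ((γ • fun t : ℝ => t ^ (γ - 1)) t) t :=
      fun t ht => Real.hasDerivAt_rpow_const (Or.inl ht.ne')
    obtain ⟨ξ₁, hξ₁, hslope⟩ := exists_hasDerivAt_eq_slope _ _ (lt_add_one x)
      (fun t ht => (hasDerivAt_iterate_fwdDiff hderiv k
        (hx.trans_le ht.1)).continuousAt.continuousWithinAt)
      (fun t ht => hasDerivAt_iterate_fwdDiff hderiv k (hx.trans ht.1))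
    obtain ⟨ξ, hξ, hξeq⟩ := ih (γ - 1) (hx.trans hξ₁.1)
    refine ⟨ξ, ⟨hξ₁.1.le.trans hξ.1, by push_cast; linarith [hξ.2, hξ₁.2]⟩, ?_⟩
    rw [add_sub_cancel_left, div_one, fwdDiff_iter_const_smul, Pi.smul_apply, hξeq] at hslope
    rw [iterate_succ_apply', fwdDiff, ← hslope, prod_range_succ']
    push_cast
    ring_nf

theorem prod_range_sub_natCast_pos {γ : ℝ} {k : ℕ} (hk : (k : ℝ) - 1 < γ) :
    0 < ∏ i ∈ range k, (γ - i) :=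
  prod_pos fun i hi => by
    have : (i : ℝ) + 1 ≤ k := by exact_mod_cast mem_range.mp hi
    linarith

theorem tendsto_iterate_fwdDiff_rpow_atTop {γ : ℝ} {k : ℕ} (hk : k < γ) :
    Tendsto (fun n : ℕ => Δ_[1] ^[k] (fun t : ℝ => t ^ γ) n) atTop atTop := by
  have hP := prod_range_sub_natCast_pos (γ := γ) (k := k) (by linarith)
  refine tendsto_atTop_mono' atTop ?_ <|
    ((tendsto_rpow_atTop (sub_pos.2 hk)).comp tendsto_natCast_atTop_atTop).const_mul_atTop hP
  filter_upwards [eventually_gt_atTop 0] with n hn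
  obtain ⟨ξ, hξ, hξeq⟩ := exists_iterate_fwdDiff_rpow_eq k γ (Nat.cast_pos.2 hn)
  rw [hξeq, comp_apply]
  gcongr
  exact hξ.1

theorem tendsto_iterate_fwdDiff_rpow_zero {γ : ℝ} {k : ℕ} (hk₁ : (k : ℝ) - 1 < γ)
    (hk₂ : γ < k) :
    Tendsto (fun n : ℕ => Δ_[1] ^[k] (fun t : ℝ => t ^ γ) n) atTop (nhds 0) := by
  have hP := prod_range_sub_natCast_pos hk₁
  have hlim : Tendsto (fun n : ℕ => (∏ i ∈ range k, (γ - i)) * (n : ℝ) ^ (γ - k))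
      atTop (nhds 0) := by
    simpa using ((tendsto_rpow_neg_atTop (sub_pos.2 hk₂)).comp
      tendsto_natCast_atTop_atTop).const_mul (∏ i ∈ range k, (γ - i))
  refine squeeze_zero' ?_ ?_ hlim <;> filter_upwards [eventually_gt_atTop 0] with n hn <;>
    obtain ⟨ξ, hξ, hξeq⟩ := exists_iterate_fwdDiff_rpow_eq k γ (Nat.cast_pos.2 hn) <;> rw [hξeq]
  · have : 0 < ξ := (Nat.cast_pos.2 hn).trans_le hξ.1
    positivity
  · exact mul_le_mul_of_nonneg_left
      (Real.rpow_le_rpow_of_nonpos (Nat.cast_pos.2 hn) hξ.1 (by linarith)) hP.le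

def HasLongRunsModOne (s : ℕ → ℝ) : Prop :=
  ∀ x ε : ℝ, 0 < ε → ∀ L N : ℕ, ∃ n ≥ N, ∀ j ≤ L, ∃ z : ℤ, |s (n + j) - x - z| < ε

theorem exists_abs_sub_sub_intCast_le_of_fwdDiff {s : ℕ → ℝ} {n J : ℕ} {y η : ℝ}
    (h : ∀ i < J, ∃ z : ℤ, |Δ_[1] s (n + i) - y - z| ≤ η) :
    ∃ Z : ℤ, |s (n + J) - s n - J * y - Z| ≤ J * η := by
  induction J with
  | zero => exact ⟨0, by simp⟩
  | succ J ih =>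
    obtain ⟨Z, hZ⟩ := ih fun i hi => h i (by omega)
    obtain ⟨z, hz⟩ := h J (by omega)
    refine ⟨Z + z, ?_⟩
    have hsplit : s (n + (J + 1)) - s n - ↑(J + 1) * y - ↑(Z + z)
        = (s (n + J) - s n - J * y - Z) + (Δ_[1] s (n + J) - y - z) := by
      simp only [fwdDiff]; push_cast; ring_nf
    calc _ = _ := by rw [hsplit]
      _ ≤ _ := abs_add_le _ _
      _ ≤ J * η + η := add_le_add hZ hz
      _ = _ := by push_cast; ring

theorem exists_ge_mem_Ico_of_tendsto_atTop {s : ℕ → ℝ} (hs : Tendsto s atTop atTop) {N : ℕ}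
    {v η : ℝ} (hN : s N < v) (hstep : ∀ n ≥ N, Δ_[1] s n < η) :
    ∃ n ≥ N, s n ∈ Set.Ico v (v + η) := by
  have hex : ∃ m, v ≤ s (N + m) := by
    obtain ⟨M, hM⟩ := eventually_atTop.mp (hs.eventually_ge_atTop v)
    exact ⟨M, hM _ (by omega)⟩
  set m := Nat.find hex
  have hm : m ≠ 0 := fun h0 => (Nat.find_spec hex).not_gt (by simpa [m, h0] using hN)
  have hprev : s (N + (m - 1)) < v := not_le.mp (Nat.find_min hex (by omega))
  have hlast := hstep (N + (m - 1)) (by omega)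
  rw [fwdDiff, show N + (m - 1) + 1 = N + m by omega] at hlast
  exact ⟨N + m, by omega, Nat.find_spec hex, by linarith⟩

theorem hasLongRunsModOne_of_tendsto {s : ℕ → ℝ} (hs : Tendsto s atTop atTop)
    (hds : Tendsto (Δ_[1] s) atTop (nhds 0)) : HasLongRunsModOne s := by
  intro x ε hε L N
  set η := ε / (L + 1) with hη_def
  have hη : 0 < η := by positivity
  obtain ⟨N₁, hN₁⟩ := eventually_atTop.mp (hds.eventually (Metric.ball_mem_nhds 0 hη))
  have hsmall : ∀ n ≥ max N N₁, |Δ_[1] s n| < η := fun n hn => by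
    simpa using hN₁ n (le_of_max_le_right hn)
  set m : ℤ := ⌊s (max N N₁) - x⌋ + 1
  obtain ⟨n, hn, hcross⟩ := exists_ge_mem_Ico_of_tendsto_atTop hs (v := x + m) (η := η)
    (by have := Int.lt_floor_add_one (s (max N N₁) - x); push_cast [m]; linarith)
    (fun n hn => (le_abs_self _).trans_lt (hsmall n hn))
  refine ⟨n, le_of_max_le_left hn, fun j hj => ?_⟩
  obtain ⟨Z, hZ⟩ := exists_abs_sub_sub_intCast_le_of_fwdDiff (s := s) (n := n) (J := j) (y := 0)
    (η := η) fun i _ => ⟨0, by simpa using (hsmall (n + i) (by omega)).le⟩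
  refine ⟨m + Z, ?_⟩
  have hjη : (j : ℝ) * η ≤ L * η := by gcongr
  have hLη : (L : ℝ) * η + η = ε := by rw [hη_def]; field_simp
  rw [mul_zero, sub_zero] at hZ
  calc |s (n + j) - x - ↑(m + Z)| = |(s (n + j) - s n - Z) + (s n - (x + m))| := by
        push_cast; ring_nf
    _ ≤ |s (n + j) - s n - Z| + |s n - (x + m)| := abs_add_le _ _
    _ < L * η + η := by
        rw [abs_of_nonneg (sub_nonneg.2 hcross.1)]
        linarith [hcross.2]
    _ = ε := hLη

theorem HasLongRunsModOne.of_fwdDiff {s : ℕ → ℝ} (h : HasLongRunsModOne (Δ_[1] s)) :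
    HasLongRunsModOne s := by
  intro x ε hε L N
  -- a run on which `Δ s ≡ y (mod 1)`, long enough to reach `x` and then stay `L` more steps
  set y := ε / (2 * (L + 2)) with hy_def
  have hy : 0 < y := by positivity
  have hLy : ((L : ℝ) + 2) * y = ε / 2 := by rw [hy_def]; field_simp
  set M := ⌊1 / y⌋₊
  set η := ε / (2 * (M + L + 1)) with hη_def
  have hMη : ((M : ℝ) + L + 1) * η = ε / 2 := by rw [hη_def]; field_simp
  obtain ⟨n₀, hn₀, hrun⟩ := h y η (by positivity) (M + L) N
  set t := x - s n₀
  set j₀ := ⌊Int.fract t / y⌋₊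
  have hj₀M : j₀ ≤ M := Nat.floor_le_floor (by gcongr; exact (Int.fract_lt_one t).le)
  have hj₀_le : j₀ * y ≤ Int.fract t :=
    (le_div_iff₀ hy).1 (Nat.floor_le (div_nonneg (Int.fract_nonneg t) hy.le))
  have hj₀_lt : Int.fract t < (j₀ + 1) * y := (div_lt_iff₀ hy).1 (Nat.lt_floor_add_one _)
  refine ⟨n₀ + j₀, by omega, fun i hi => ?_⟩
  obtain ⟨Z, hZ⟩ := exists_abs_sub_sub_intCast_le_of_fwdDiff (J := j₀ + i)
    fun k hk => (hrun k (by omega)).imp fun _ hz => hz.le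
  have hdrift : ((j₀ + i : ℕ) : ℝ) * η < ε / 2 := by
    have : ((j₀ + i : ℕ) : ℝ) < M + L + 1 := by exact_mod_cast (by omega : j₀ + i < M + L + 1)
    nlinarith
  have hlag : |(j₀ * y - Int.fract t) + i * y| < ε / 2 := by
    have : (i : ℝ) ≤ L := by exact_mod_cast hi
    exact abs_lt.2 ⟨by nlinarith, by nlinarith⟩
  have hx : x = s n₀ + ⌊t⌋ + Int.fract t := by rw [add_assoc, Int.floor_add_fract]; ring
  have hsplit : s (n₀ + j₀ + i) - x - ↑(Z - ⌊t⌋)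
      = (s (n₀ + (j₀ + i)) - s n₀ - ((j₀ + i : ℕ) : ℝ) * y - Z)
        + ((j₀ * y - Int.fract t) + i * y) := by
    rw [hx, add_assoc n₀]; push_cast; ring
  refine ⟨Z - ⌊t⌋, ?_⟩
  rw [hsplit]
  linarith [abs_add_le (s (n₀ + (j₀ + i)) - s n₀ - ((j₀ + i : ℕ) : ℝ) * y - Z)
    ((j₀ * y - Int.fract t) + i * y)]

theorem hasLongRunsModOne_of_tendsto_iterate_fwdDiff (k : ℕ) {s : ℕ → ℝ}
    (h₁ : Tendsto (Δ_[1] ^[k] s) atTop atTop) (h₂ : Tendsto (Δ_[1] ^[k + 1] s) atTop (nhds 0)) :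
    HasLongRunsModOne s := by
  induction k generalizing s with
  | zero => exact hasLongRunsModOne_of_tendsto h₁ h₂
  | succ k ih =>
    rw [iterate_succ_apply] at h₁ h₂
    exact (ih h₁ h₂).of_fwdDiff

theorem hasLongRunsModOne_mul_rpow {A c : ℝ} (hA : 0 < A) (hc : 0 < c)
    (hcint : ∀ k : ℤ, (k : ℝ) ≠ c) : HasLongRunsModOne fun n : ℕ => A * (n : ℝ) ^ c := by
  set k := ⌊c⌋₊
  have hk : (k : ℝ) < c :=
    (Nat.floor_le hc.le).lt_of_ne (by exact_mod_cast hcint k)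
  have hk' : c < k + 1 := Nat.lt_floor_add_one c
  have hiter (j : ℕ) : Δ_[1] ^[j] (fun n : ℕ => A * (n : ℝ) ^ c)
      = fun n : ℕ => A * Δ_[1] ^[j] (fun t : ℝ => t ^ c) n := by
    ext n
    rw [show (fun n : ℕ => A * (n : ℝ) ^ c) = A • ((fun t : ℝ => t ^ c) ∘ Nat.castAddMonoidHom ℝ)
      from rfl, fwdDiff_iter_const_smul, Pi.smul_apply, fwdDiff_iter_comp_addMonoidHom]
    simp
  refine hasLongRunsModOne_of_tendsto_iterate_fwdDiff k ?_ ?_ <;> rw [hiter]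
  · exact (tendsto_iterate_fwdDiff_rpow_atTop hk).const_mul_atTop hA
  · simpa using (tendsto_iterate_fwdDiff_rpow_zero (k := k + 1) (by push_cast; linarith)
      (by exact_mod_cast hk')).const_mul A

theorem exists_floor_rpow_modEq {c : ℝ} (hc : 0 < c) (hcint : ∀ k : ℤ, (k : ℝ) ≠ c) {q : ℕ}
    (hq : 0 < q) (a : ℤ) : ∃ n : ℕ, 0 < n ∧ ⌊(n : ℝ) ^ c⌋ ≡ a [ZMOD q] := by
  have hq' : (0 : ℝ) < q := Nat.cast_pos.2 hq
  obtain ⟨n, hn, hrun⟩ := hasLongRunsModOne_mul_rpow (inv_pos.2 hq') hc hcint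
    ((a + 1 / 2) / q) (1 / 2 / q) (by positivity) 0 1
  obtain ⟨z, hz⟩ := hrun 0 le_rfl
  have hscale : (q : ℝ)⁻¹ * (n : ℝ) ^ c - (a + 1 / 2) / q - z
      = ((n : ℝ) ^ c - (a + 1 / 2) - q * z) / q := by
    field_simp
  rw [add_zero, hscale, abs_div, abs_of_pos hq', div_lt_div_iff_of_pos_right hq', abs_lt] at hz
  have hfloor : ⌊(n : ℝ) ^ c⌋ = a + q * z := by
    rw [Int.floor_eq_iff]
    push_cast
    constructor <;> linarith [hz.1, hz.2]
  exact ⟨n, hn, by rw [hfloor, Int.modEq_iff_dvd]; exact ⟨-z, by ring⟩⟩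

/-- For every non-integer real c > 1 and every odd prime p, there is a positive
integer n such that ⌊n^c⌋ is a quadratic non-residue modulo p. -/
theorem exists_piatetski_shapiro_nonresidue
    (c : ℝ) (hc : 1 < c) (hcint : ∀ k : ℤ, (k : ℝ) ≠ c)
    (p : ℕ) (hp : p.Prime) (hodd : Odd p) :
    ∃ n : ℕ, 0 < n ∧ @legendreSym p ⟨hp⟩ ⌊(n : ℝ) ^ c⌋ = -1 := by
  have : Fact p.Prime := ⟨hp⟩
  obtain ⟨b, hb⟩ := FiniteField.exists_nonsquare (F := ZMod p)
    (by rw [ZMod.ringChar_zmod_n]; rintro rfl; exact Nat.not_odd_iff_even.2 even_two hodd)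
  obtain ⟨n, hn, hmod⟩ := exists_floor_rpow_modEq (by linarith) hcint hp.pos (b.val : ℤ)
  refine ⟨n, hn, legendreSym.eq_neg_one_iff p |>.2 ?_⟩
  rwa [(ZMod.intCast_eq_intCast_iff _ _ p).2 hmod, Int.cast_natCast, ZMod.natCast_zmod_val]
end
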